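/- Let w > 0 and let h : [0, w] → ℝ be continuous with h(0) = h(w) = 0. For an integer ℓ ≥ 1, set H = F_{ν^ℓ}[h] and g = Φ^ℓ[H] : [0, 2^ℓ w] → ℝ. Then g is ℓ-times continuously differentiable on [0, 2^ℓ w] and its derivatives vanish at both endpoints: g^{(j)}(0) = g^{(j)}(2^ℓ w) = 0 for every j = 1, …, ℓ. -/

import Mathlib

open MeasureTheory

/-- The neutralizing vectors: `ν⁰ = (1)` and `ν^k = ν^{k−1} ⊕ (−ν^{k−1}) ∈ {±1}^{2^k}`,
where `⊕` is concatenation.  `nu k` lists the entries of `ν^k` (0-indexed). -/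
def nu : ℕ → List ℝ
  | 0 => [1]
  | k + 1 => nu k ++ (nu k).map (fun x => -x)

/-- The `v`-flock of a base function `h : [0, w] → ℝ`: the function `F_v[h] : ℝ → ℝ` that on
each subinterval `[(i−1)w, iw)` (for `i = 1, …, length v`) equals `v_i · h(x − (i−1)w)`
(weighted copies of `h` placed side by side), and vanishes elsewhere. -/
noncomputable def flock (w : ℝ) (v : List ℝ) (h : ℝ → ℝ) : ℝ → ℝ := fun x =>
  ∑ i ∈ Finset.range v.length,
    if (i : ℝ) * w ≤ x ∧ x < ((i : ℝ) + 1) * w then v.getD i 0 * h (x - (i : ℝ) * w) else 0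

/-- The level-`ℓ` anti-derivative: `Φ⁰[f] = f` and `Φ^ℓ[f](x) = ∫_0^x Φ^{ℓ−1}[f](u) du`. -/
noncomputable def antideriv : ℕ → (ℝ → ℝ) → (ℝ → ℝ)
  | 0, f => f
  | ℓ + 1, f => fun x => ∫ u in (0:ℝ)..x, antideriv ℓ f u

section Aux

variable {w : ℝ} {h : ℝ → ℝ}

lemma nu_length (k : ℕ) : (nu k).length = 2 ^ k := by
  induction k with
  | zero => rfl
  | succ k ih => simp [nu, ih]; ring

lemma antideriv_succ_def (m : ℕ) (f : ℝ → ℝ) :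
    antideriv (m + 1) f = fun x => ∫ u in (0:ℝ)..x, antideriv m f u := rfl

lemma antideriv_continuous {f : ℝ → ℝ} (hf : Continuous f) :
    ∀ m, Continuous (antideriv m f)
  | 0 => hf
  | m + 1 => by
    rw [antideriv_succ_def]
    exact continuous_iff_continuousAt.mpr fun x =>
      (((antideriv_continuous hf m).integral_hasStrictDerivAt 0 x).hasDerivAt).continuousAt

lemma antideriv_hasDerivAt {f : ℝ → ℝ} (hf : Continuous f) (m : ℕ) (x : ℝ) :
    HasDerivAt (antideriv (m + 1) f) (antideriv m f x) x := by
  rw [antideriv_succ_def]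
  exact (((antideriv_continuous hf m).integral_hasStrictDerivAt 0 x)).hasDerivAt

lemma antideriv_contDiff {f : ℝ → ℝ} (hf : Continuous f) (m : ℕ) :
    ContDiff ℝ (m : ℕ) (antideriv m f) := by
  induction m with
  | zero => exact contDiff_zero.mpr hf
  | succ m ih =>
    rw [show ((m + 1 : ℕ) : WithTop ℕ∞) = (m : ℕ) + 1 by push_cast; rfl]
    rw [contDiff_succ_iff_deriv]
    refine ⟨fun x => (antideriv_hasDerivAt hf m x).differentiableAt, ?_, ?_⟩
    · intro hcontra; simp at hcontra
    · have : deriv (antideriv (m + 1) f) = antideriv m f :=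
        funext fun x => (antideriv_hasDerivAt hf m x).deriv
      rw [this]; exact ih

lemma antideriv_sub {f g : ℝ → ℝ} (hf : Continuous f) (hg : Continuous g) (m : ℕ) (x : ℝ) :
    antideriv m (fun y => f y - g y) x = antideriv m f x - antideriv m g x := by
  induction m generalizing x with
  | zero => rfl
  | succ m ih =>
    simp only [antideriv_succ_def]
    rw [intervalIntegral.integral_congr (g := fun u => antideriv m f u - antideriv m g u)
      (fun u _ => ih u)]
    exact intervalIntegral.integral_sub
      ((antideriv_continuous hf m).intervalIntegrable _ _)
      ((antideriv_continuous hg m).intervalIntegrable _ _)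

lemma antideriv_nonpos {f : ℝ → ℝ} (hf0 : ∀ x ≤ 0, f x = 0) :
    ∀ m, ∀ x ≤ 0, antideriv m f x = 0 := by
  intro m
  induction m with
  | zero => exact hf0
  | succ m ih =>
    intro x hx
    simp only [antideriv_succ_def]
    rw [intervalIntegral.integral_congr (g := fun _ => (0:ℝ))]
    · simp
    · intro u hu
      rw [Set.uIcc_of_ge hx] at hu
      exact ih u hu.2

lemma antideriv_shift {f : ℝ → ℝ} (hf : Continuous f) (hf0 : ∀ x ≤ 0, f x = 0)
    {L : ℝ} (hL : 0 ≤ L) (m : ℕ) (x : ℝ) :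
    antideriv m (fun y => f (y - L)) x = antideriv m f (x - L) := by
  induction m generalizing x with
  | zero => rfl
  | succ m ih =>
    simp only [antideriv_succ_def]
    rw [intervalIntegral.integral_congr (g := fun u => antideriv m f (u - L))
      (fun u _ => ih u)]
    rw [intervalIntegral.integral_comp_sub_right _ L, zero_sub]
    have h1 : IntervalIntegrable (antideriv m f) volume (-L) 0 :=
      (antideriv_continuous hf m).intervalIntegrable _ _
    have h2 : IntervalIntegrable (antideriv m f) volume 0 (x - L) :=
      (antideriv_continuous hf m).intervalIntegrable _ _
    rw [← intervalIntegral.integral_add_adjacent_intervals h1 h2]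
    have hz : (∫ u in (-L)..(0:ℝ), antideriv m f u) = 0 := by
      rw [intervalIntegral.integral_congr (g := fun _ => (0:ℝ))]
      · simp
      · intro u hu
        rw [Set.uIcc_of_le (by linarith)] at hu
        exact antideriv_nonpos hf0 m u hu.2
    rw [hz, zero_add]

lemma flock_zero_eq (w : ℝ) (h : ℝ → ℝ) (x : ℝ) :
    flock w (nu 0) h x = if 0 ≤ x ∧ x < w then h x else 0 := by
  simp [flock, nu]

lemma flock_succ_eq (w : ℝ) (h : ℝ → ℝ) (k : ℕ) (x : ℝ) :
    flock w (nu (k + 1)) h x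
      = flock w (nu k) h x - flock w (nu k) h (x - 2 ^ k * w) := by
  have hlen : (nu (k + 1)).length = 2 ^ k + 2 ^ k := by
    simp [nu, nu_length]
  unfold flock
  rw [hlen, ← Finset.sum_range_add_sum_Ico _ (Nat.le_add_right (2 ^ k) (2 ^ k)), nu_length,
    sub_eq_add_neg]
  congr 1
  · refine Finset.sum_congr rfl fun i hi => ?_
    rw [Finset.mem_range] at hi
    rw [show (nu (k + 1)).getD i 0 = (nu k).getD i 0 by
      rw [nu]; exact List.getD_append _ _ _ _ (by rw [nu_length]; exact hi)]
  · rw [Finset.sum_Ico_eq_sum_range]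
    rw [show 2 ^ k + 2 ^ k - 2 ^ k = 2 ^ k by omega]
    rw [← Finset.sum_neg_distrib]
    refine Finset.sum_congr rfl fun j hj => ?_
    rw [Finset.mem_range] at hj
    have hgetD : (nu (k + 1)).getD (2 ^ k + j) 0 = -(nu k).getD j 0 := by
      rw [nu, List.getD_append_right _ _ _ _ (by rw [nu_length]; omega)]
      rw [nu_length, show 2 ^ k + j - 2 ^ k = j by omega]
      rw [List.getD_eq_getElem _ _ (by simpa [nu_length] using hj),
          List.getD_eq_getElem _ _ (by simpa [nu_length] using hj)]
      simp
    have hcast : ((2 ^ k + j : ℕ) : ℝ) = 2 ^ k + (j : ℝ) := by push_cast; ring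
    have hc : (((2 ^ k + j : ℕ) : ℝ) * w ≤ x ∧ x < (((2 ^ k + j : ℕ) : ℝ) + 1) * w)
        ↔ ((j : ℝ) * w ≤ x - 2 ^ k * w ∧ x - 2 ^ k * w < ((j : ℝ) + 1) * w) := by
      rw [hcast]
      constructor <;> rintro ⟨a, b⟩ <;> constructor <;> nlinarith
    by_cases hcnd : (j : ℝ) * w ≤ x - 2 ^ k * w ∧ x - 2 ^ k * w < ((j : ℝ) + 1) * w
    · rw [if_pos (hc.mpr hcnd), if_pos hcnd, hgetD,
        show x - ((2 ^ k + j : ℕ) : ℝ) * w = x - 2 ^ k * w - (j : ℝ) * w by rw [hcast]; ring]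
      ring
    · rw [if_neg (fun hA => hcnd (hc.mp hA)), if_neg hcnd, neg_zero]

lemma flock_nonpos (hw : 0 < w) (h0 : h 0 = 0) (v : List ℝ)
    {x : ℝ} (hx : x ≤ 0) : flock w v h x = 0 := by
  unfold flock
  refine Finset.sum_eq_zero fun i _ => ?_
  rcases lt_or_eq_of_le hx with hlt | rfl
  · rw [if_neg]
    rintro ⟨h1, -⟩
    have : (0:ℝ) ≤ (i : ℝ) * w := by positivity
    linarith
  · by_cases hi : i = 0
    · subst hi; simp [h0, hw]
    · rw [if_neg]
      rintro ⟨h1, -⟩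
      have h2 : (1:ℝ) ≤ (i : ℝ) := by exact_mod_cast Nat.one_le_iff_ne_zero.mpr hi
      nlinarith

lemma flock_ge (hw : 0 < w) (v : List ℝ) (h : ℝ → ℝ)
    {x : ℝ} (hx : (v.length : ℝ) * w ≤ x) : flock w v h x = 0 := by
  unfold flock
  refine Finset.sum_eq_zero fun i hi => ?_
  rw [Finset.mem_range] at hi
  rw [if_neg]
  rintro ⟨-, h2⟩
  have : ((i : ℝ) + 1) ≤ (v.length : ℝ) := by exact_mod_cast hi
  nlinarith

lemma flock_base_continuous (hw : 0 < w)
    (hcont : ContinuousOn h (Set.Icc 0 w)) (h0 : h 0 = 0) (hw0 : h w = 0) :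
    Continuous (fun x => if 0 ≤ x ∧ x < w then h x else 0) := by
  have hclamp : Continuous (fun x : ℝ => h (max 0 (min x w))) := by
    refine hcont.comp_continuous (by fun_prop) fun x => ?_
    exact ⟨le_max_left _ _, max_le hw.le (min_le_right _ _)⟩
  have heq : (fun x => if 0 ≤ x ∧ x < w then h x else 0)
      = fun x => if 0 ≤ x ∧ x < w then h (max 0 (min x w)) else 0 := by
    funext x
    by_cases hx : 0 ≤ x ∧ x < w
    · rw [if_pos hx, if_pos hx, min_eq_left hx.2.le, max_eq_right hx.1]
    · rw [if_neg hx, if_neg hx]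
  rw [heq]
  refine Continuous.if ?_ hclamp continuous_const
  intro a ha
  have hset : {x : ℝ | 0 ≤ x ∧ x < w} = Set.Ico 0 w := rfl
  rw [hset, frontier_Ico hw] at ha
  rcases ha with rfl | rfl
  · simp [min_eq_left hw.le, h0]
  · simp [hw.le, hw0]

lemma flock_nu_continuous (hw : 0 < w)
    (hcont : ContinuousOn h (Set.Icc 0 w)) (h0 : h 0 = 0) (hw0 : h w = 0) :
    ∀ k, Continuous (flock w (nu k) h)
  | 0 => by
    rw [show flock w (nu 0) h = fun x => if 0 ≤ x ∧ x < w then h x else 0 from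
      funext (flock_zero_eq w h)]
    exact flock_base_continuous hw hcont h0 hw0
  | k + 1 => by
    rw [funext (flock_succ_eq w h k)]
    exact (flock_nu_continuous hw hcont h0 hw0 k).sub
      ((flock_nu_continuous hw hcont h0 hw0 k).comp (continuous_sub_right _))

lemma antideriv_const_right {f : ℝ → ℝ} (hf : Continuous f) {L : ℝ} (m : ℕ)
    (hzero : ∀ x, L ≤ x → antideriv m f x = 0) {y x : ℝ} (hy : L ≤ y) (hyx : y ≤ x) :
    antideriv (m + 1) f x = antideriv (m + 1) f y := by
  simp only [antideriv_succ_def]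
  have h1 : IntervalIntegrable (antideriv m f) volume 0 y :=
    (antideriv_continuous hf m).intervalIntegrable _ _
  have h2 : IntervalIntegrable (antideriv m f) volume y x :=
    (antideriv_continuous hf m).intervalIntegrable _ _
  rw [← intervalIntegral.integral_add_adjacent_intervals h1 h2]
  have hz : (∫ u in y..x, antideriv m f u) = 0 := by
    rw [intervalIntegral.integral_congr (g := fun _ => (0:ℝ))]
    · simp
    · intro u hu
      rw [Set.uIcc_of_le hyx] at hu
      exact hzero u (le_trans hy hu.1)
  rw [hz, add_zero]

lemma flock_main (hw : 0 < w)
    (hcont : ContinuousOn h (Set.Icc 0 w)) (h0 : h 0 = 0) (hw0 : h w = 0) :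
    ∀ k m, 1 ≤ m → m ≤ k → ∀ x, 2 ^ k * w ≤ x →
      antideriv m (flock w (nu k) h) x = 0 := by
  intro k
  induction k with
  | zero => intro m h1 h2; omega
  | succ k ih =>
    intro m h1 h2 x hx
    set L : ℝ := 2 ^ k * w with hLdef
    have hL : (0:ℝ) ≤ L := by positivity
    have hcontk : Continuous (flock w (nu k) h) := flock_nu_continuous hw hcont h0 hw0 k
    have hshift : Continuous (fun y => flock w (nu k) h (y - L)) :=
      hcontk.comp (continuous_sub_right L)
    have heq : flock w (nu (k + 1)) h
        = fun y => flock w (nu k) h y - flock w (nu k) h (y - L) :=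
      funext fun y => flock_succ_eq w h k y
    rw [heq, antideriv_sub hcontk hshift,
      antideriv_shift hcontk (fun z hz => flock_nonpos hw h0 _ hz) hL]
    obtain ⟨m', rfl⟩ : ∃ m', m = m' + 1 := ⟨m - 1, by omega⟩
    have hzero : ∀ z, L ≤ z → antideriv m' (flock w (nu k) h) z = 0 := by
      rcases Nat.eq_zero_or_pos m' with rfl | hm'
      · intro z hz
        refine flock_ge hw _ _ ?_
        have hlen : ((nu k).length : ℝ) * w = L := by
          rw [nu_length, hLdef]; push_cast; ring
        linarith
      · intro z hz; exact ih m' hm' (by omega) z hz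
    have h2L : (2:ℝ) ^ (k + 1) * w = L + L := by rw [hLdef]; ring
    have hx1 : L ≤ x := by linarith
    have hx2 : L ≤ x - L := by linarith
    rw [antideriv_const_right hcontk m' hzero (le_refl L) hx1,
      antideriv_const_right hcontk m' hzero (le_refl L) hx2, sub_self]

lemma iterDW {f : ℝ → ℝ} (hf : Continuous f) {T : ℝ} (hT : 0 < T) (ℓ : ℕ) :
    ∀ j, j ≤ ℓ → ∀ x ∈ Set.Icc (0:ℝ) T,
      iteratedDerivWithin j (antideriv ℓ f) (Set.Icc 0 T) x = antideriv (ℓ - j) f x := by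
  intro j
  induction j with
  | zero => intro _ x _; simp
  | succ j ih =>
    intro hj x hx
    have hu := uniqueDiffOn_Icc hT
    rw [iteratedDerivWithin_succ]
    rw [derivWithin_congr (fun y hy => ih (by omega) y hy) (ih (by omega) x hx)]
    obtain ⟨m, hm⟩ : ∃ m, ℓ - j = m + 1 := ⟨ℓ - (j + 1), by omega⟩
    rw [hm, (antideriv_hasDerivAt hf m x).hasDerivWithinAt.derivWithin (hu x hx)]
    congr 1
    omega

end Aux

/-- **Vanishing derivatives at the endpoints (Proposition 3 of the appendix).**
Let `h : [0, w] → ℝ` be continuous with `h(0) = h(w) = 0`, let `ℓ ≥ 1`, and set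
`H = F_{ν^ℓ}[h]` and `g = Φ^ℓ[H]`.  Then `g` is `ℓ`-times continuously differentiable on
`[0, 2^ℓ w]` and `g^{(j)}(0) = g^{(j)}(2^ℓ w) = 0` for every `j = 1, …, ℓ`. -/
theorem antideriv_flock_vanishing_derivs
    (w : ℝ) (hw : 0 < w) (h : ℝ → ℝ)
    (hcont : ContinuousOn h (Set.Icc 0 w)) (h0 : h 0 = 0) (hw0 : h w = 0)
    (ℓ : ℕ) (hℓ : 1 ≤ ℓ) :
    ContDiffOn ℝ (ℓ : ℕ) (antideriv ℓ (flock w (nu ℓ) h)) (Set.Icc 0 (2 ^ ℓ * w)) ∧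
    ∀ j : ℕ, 1 ≤ j → j ≤ ℓ →
      iteratedDerivWithin j (antideriv ℓ (flock w (nu ℓ) h)) (Set.Icc 0 (2 ^ ℓ * w)) 0 = 0 ∧
      iteratedDerivWithin j (antideriv ℓ (flock w (nu ℓ) h)) (Set.Icc 0 (2 ^ ℓ * w))
        (2 ^ ℓ * w) = 0 := by
  have hF : Continuous (flock w (nu ℓ) h) := flock_nu_continuous hw hcont h0 hw0 ℓ
  have hT : (0:ℝ) < 2 ^ ℓ * w := by positivity
  constructor
  · exact (antideriv_contDiff hF ℓ).contDiffOn
  · intro j hj1 hjℓ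
    have h0mem : (0:ℝ) ∈ Set.Icc (0:ℝ) (2 ^ ℓ * w) := ⟨le_refl _, hT.le⟩
    have hTmem : (2:ℝ) ^ ℓ * w ∈ Set.Icc (0:ℝ) (2 ^ ℓ * w) := ⟨hT.le, le_refl _⟩
    rw [iterDW hF hT ℓ j hjℓ 0 h0mem, iterDW hF hT ℓ j hjℓ _ hTmem]
    constructor
    · exact antideriv_nonpos (fun z hz => flock_nonpos hw h0 _ hz) (ℓ - j) 0 (le_refl 0)
    · rcases Nat.eq_or_lt_of_le hjℓ with rfl | hlt
      · rw [Nat.sub_self]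
        refine flock_ge hw _ _ ?_
        rw [nu_length]
        push_cast
        exact le_refl _
      · exact flock_main hw hcont h0 hw0 ℓ (ℓ - j) (by omega) (by omega) _ (le_refl _)
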